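/- Let (y_j)_{j=1}^{β_k} be i.i.d. uniform on {+1,−1}. Then the probability that the word I_k occurs as a consecutive subword of (y_1,…,y_{β_k}) is at most 1 − (1 − 1/1000)^{1000} + 1000·ℓ_k·2^{−ℓ_k}. -/

import Mathlib

open MeasureTheory
open scoped Classical ENNReal

noncomputable section

namespace BHS

/-! ## Generic notions about specifications on a finite alphabet -/

/-- The left shift on two-sided sequences. -/
def shift {A : Type*} (ω : ℤ → A) : ℤ → A := fun i => ω (i + 1)

/-- The past of a two-sided sequence: `past ω n = ω (-(n+1))`,
i.e. the sequence `x₋₁, x₋₂, …`. -/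
def past {A : Type*} (ω : ℤ → A) : ℕ → A := fun n => ω (-(n + 1 : ℤ))

/-- The variation of a specification at distance `k`:
the supremum of `‖g b - g b'‖₁` over pasts agreeing in their first `k` coordinates. -/
def specVar {A : Type*} [Fintype A] (g : (ℕ → A) → A → ℝ) (k : ℕ) : ℝ :=
  sSup {r : ℝ | ∃ b b' : ℕ → A, (∀ i : ℕ, i < k → b i = b' i) ∧
    r = ∑ a : A, |g b a - g b' a|}

/-- `μ` is a (shift-invariant) Gibbs measure for the specification `g`. -/
def IsGibbs {A : Type*} [Fintype A] [MeasurableSpace A]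
    (g : (ℕ → A) → A → ℝ) (μ : Measure (ℤ → A)) : Prop :=
  IsProbabilityMeasure μ ∧
  (∀ s : Set (ℤ → A), MeasurableSet s → μ (shift ⁻¹' s) = μ s) ∧
  ∀ f : A → ℝ,
    (MeasureTheory.condExp (MeasurableSpace.comap past inferInstance) μ
        (fun ω => f (ω 0))) =ᵐ[μ]
      (fun ω => ∑ a : A, g (past ω) a * f a)

/-- The coordinates of `μ` are i.i.d. fair ±1 coin flips (`true` = +1). -/
def IsCoinFlips {ι : Type*} (μ : Measure (ι → Bool)) : Prop :=
  IsProbabilityMeasure μ ∧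
  ∀ (s : Finset ι) (f : ι → Bool),
    μ {y | ∀ i ∈ s, y i = f i} = (1 / 2 : ℝ≥0∞) ^ s.card

/-! ## The construction of Berger, Hoffman and Sidoravicius -/

/-- `ℓ_k = ⌈(1+ε)^k⌉`. -/
def ell (ε : ℝ) (k : ℕ) : ℕ := ⌈(1 + ε) ^ k⌉₊

/-- `β_k = 2 ^ ℓ_k`. -/
def beta (ε : ℝ) (k : ℕ) : ℕ := 2 ^ ell ε k

/-- `ν_k = β_k / β_{k-1}`. -/
def nu (ε : ℝ) (k : ℕ) : ℝ := (beta ε k : ℝ) / (beta ε (k - 1) : ℝ)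

/-- `K` satisfies the three inequalities required of `K(ε)`, for every `k ≥ K`. -/
def KGood (ε : ℝ) (K : ℕ) : Prop :=
  ∀ k : ℕ, K ≤ k →
    ((1 - (2 : ℝ) ^ (-(ell ε k : ℝ))) ^
        ((beta ε k : ℝ) ^ (1 + ε) / (2 * (ell ε (k - 1) : ℝ))) <
      (2 : ℝ) ^ (-(3 * k : ℝ))) ∧
    (nu ε k ^ (-ε) ≤ (2 : ℝ) ^ (-(3 * k : ℝ))) ∧
    ((2 : ℝ) ^ (nu ε k ^ (1 - ε)) * ((2 : ℝ) ^ (-(k : ℝ))) ^ (nu ε k ^ (1 - ε) / 2) ≤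
      (2 : ℝ) ^ (-(3 * k : ℝ)))

/-- The word `I_k` (that is, `ℓ_k − 1` pluses followed by one minus; `true` = +1)
ends at position `c` in the two-sided sequence `y`. -/
def EndsAt (ε : ℝ) (k : ℕ) (y : ℤ → Bool) (c : ℤ) : Prop :=
  y c = false ∧ ∀ i : ℕ, 1 ≤ i → i ≤ ell ε k - 1 → y (c - (i : ℤ)) = true

/-- `[a, b)` is a (complete) `k` block of `y`. -/
def IsBlock (ε : ℝ) (k : ℕ) (y : ℤ → Bool) (a b : ℤ) : Prop :=
  a < b ∧ EndsAt ε k y a ∧ EndsAt ε k y b ∧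
    ∀ c : ℤ, a < c → c < b → ¬EndsAt ε k y c

/-- The left endpoint of the `k` block containing `t`. -/
def leftEnd (ε : ℝ) (k : ℕ) (y : ℤ → Bool) (t : ℤ) : ℤ :=
  sSup {c : ℤ | c ≤ t ∧ EndsAt ε k y c}

/-- The right endpoint of the `k` block containing `t`. -/
def rightEnd (ε : ℝ) (k : ℕ) (y : ℤ → Bool) (t : ℤ) : ℤ :=
  sInf {c : ℤ | t < c ∧ EndsAt ε k y c}

/-- `t` lies in the beginning of the `k` block containing it:  for `k = K` this means
`t - a < β_K^{1-ε}`, and for `k ≠ K` it means that `t` lies in one of the first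
`⌈ν_k^{1-ε}⌉` `(k-1)` blocks of its `k` block. -/
def InBeginning (ε : ℝ) (K k : ℕ) (y : ℤ → Bool) (t : ℤ) : Prop :=
  if k = K then ((t - leftEnd ε k y t : ℤ) : ℝ) < (beta ε K : ℝ) ^ (1 - ε)
  else ((Finset.Ioc (leftEnd ε k y t) t).filter (fun c => EndsAt ε (k - 1) y c)).card <
    ⌈nu ε k ^ (1 - ε)⌉₊

/-- `t` lies in the opening of the `k` block containing it. -/
def InOpening (ε : ℝ) (K k : ℕ) (y : ℤ → Bool) (t : ℤ) : Prop :=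
  ∀ j : ℕ, K ≤ j → j ≤ k →
    InBeginning ε K j y t ∧ (t - leftEnd ε j y t) < (beta ε (j + 1) : ℤ)

/-- The opening `C(B)` of the `k` block `B = [a, b)`. -/
def opening (ε : ℝ) (K k : ℕ) (y : ℤ → Bool) (a b : ℤ) : Finset ℤ :=
  (Finset.Ico a b).filter (fun t => InOpening ε K k y t)

/-- The `k` block `[a, b)` is good. -/
def GoodBlock (ε : ℝ) (K k : ℕ) (y : ℤ → Bool) (a b : ℤ) : Prop :=
  ((b - a : ℤ) : ℝ) < (beta ε k : ℝ) ^ (1 + ε) ∧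
  (beta ε k : ℝ) ^ (1 - ε) * (2 : ℝ) ^ (-(k : ℝ)) < ((opening ε K k y a b).card : ℝ)

/-- The `k` block containing `t` is good. -/
def GoodAt (ε : ℝ) (K k : ℕ) (y : ℤ → Bool) (t : ℤ) : Prop :=
  GoodBlock ε K k y (leftEnd ε k y t) (rightEnd ε k y t)

/-- `t` is `k` beautiful. -/
def Beautiful (ε : ℝ) (K k : ℕ) (y : ℤ → Bool) (t : ℤ) : Prop :=
  ∀ j : ℕ, k ≤ j → GoodAt ε K j y t ∧ ¬InBeginning ε K j y t

/-! ### The specification `g^ε` -/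

/-- The two-sided sequence `ȳ` built from the past `y = (y₋₁, y₋₂, …)` and the
candidate value `y₀` (positions `> 0` are filled with junk `true`s). -/
def ybar (y : ℕ → Bool) (y0 : Bool) : ℤ → Bool := fun i =>
  if i = 0 then y0 else if i < 0 then y ((-i).toNat - 1) else true

/-- The set of levels `k ≥ K` such that `0` lies in the opening of its `k` block. -/
def kZeroSet (ε : ℝ) (K : ℕ) (yb : ℤ → Bool) : Set ℕ :=
  {k : ℕ | K ≤ k ∧ InOpening ε K k yb 0}

/-- `k₀`, with the convention that it equals `K - 1` when the above set is empty
(the unbounded case `k₀ = ∞` is handled separately). -/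
def kZero (ε : ℝ) (K : ℕ) (yb : ℤ → Bool) : ℕ :=
  if (kZeroSet ε K yb).Nonempty then sSup (kZeroSet ε K yb) else K - 1

/-- The opening of the (partial) `k` block of `yb` containing `0`. -/
def Cblock (ε : ℝ) (K k : ℕ) (yb : ℤ → Bool) : Finset ℤ :=
  opening ε K k yb (leftEnd ε k yb 0) 1

/-- The set `S`: the opening of the `(k₀+1)` block containing `0`, with the maximal
element removed if its cardinality is even; `S = ∅` when `k₀ = ∞`. -/
def Sset (ε : ℝ) (K : ℕ) (yb : ℤ → Bool) : Finset ℤ :=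
  if BddAbove (kZeroSet ε K yb) then
    if Even (Cblock ε K (kZero ε K yb + 1) yb).card then
      (Cblock ε K (kZero ε K yb + 1) yb).erase
        (WithBot.unbotD 0 (Cblock ε K (kZero ε K yb + 1) yb).max)
    else Cblock ε K (kZero ε K yb + 1) yb
  else ∅

/-- The bias `υ`. -/
def upsilon (ε : ℝ) (K : ℕ) (yb : ℤ → Bool) : ℝ :=
  if Sset ε K yb = ∅ then 0
  else if ∃ t ∈ Sset ε K yb, t < -(beta ε (kZero ε K yb + 2) : ℤ) then 0
  else if kZeroSet ε K yb = ∅ then 0.4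
  else (beta ε (kZero ε K yb) : ℝ) ^ (-(1 : ℝ) / 2 + ε)

/-- The ±1 value of the past `x = (x₋₁, x₋₂, …)` at the negative position `t`. -/
def xbar (x : ℕ → Bool) (t : ℤ) : ℝ := if x ((-t).toNat - 1) = true then 1 else -1

/-- `g₁(x, y, y₀)`: the probability that `x₀ = +1` given the pasts `x`, `y`
and the value `y₀`. -/
def g1 (ε : ℝ) (K : ℕ) (x y : ℕ → Bool) (y0 : Bool) : ℝ :=
  if Sset ε K (ybar y y0) = ∅ then 1 / 2
  else 1 / 2 + upsilon ε K (ybar y y0) *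
    Real.sign (∑ t ∈ Sset ε K (ybar y y0), xbar x t)

/-- The specification `g^ε` on the four letter alphabet `{±1}² = Bool × Bool`
(first coordinate `x`, second coordinate `y`, `true` = +1); the argument
`b : ℕ → Bool × Bool` is the past `((x₋₁,y₋₁), (x₋₂,y₋₂), …)`. -/
def gspec (ε : ℝ) (K : ℕ) (b : ℕ → Bool × Bool) : Bool × Bool → ℝ := fun a =>
  if a.1 = true then (1 / 2) * g1 ε K (fun i => (b i).1) (fun i => (b i).2) a.2
  else (1 / 2) * (1 - g1 ε K (fun i => (b i).1) (fun i => (b i).2) a.2)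

/-! ### Signatures -/

/-- `C′(B)`: the opening of `B`, with the maximum removed if `|C(B)|` is even. -/
def Cprime (ε : ℝ) (K k : ℕ) (y : ℤ → Bool) (a b : ℤ) : Finset ℤ :=
  if Even (opening ε K k y a b).card then
    (opening ε K k y a b).erase (WithBot.unbotD 0 (opening ε K k y a b).max)
  else opening ε K k y a b

/-- The signature `X(B_k(t))` of the `k` block containing `t`. -/
def signature (ε : ℝ) (K k : ℕ) (ω : ℤ → Bool × Bool) (t : ℤ) : ℝ :=
  Real.sign (∑ s ∈ Cprime ε K k (fun i => (ω i).2)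
      (leftEnd ε k (fun i => (ω i).2) t) (rightEnd ε k (fun i => (ω i).2) t),
    (if (ω s).1 = true then (1 : ℝ) else -1))

end BHS

/-! Split the positions `1, …, β_k` into `m = 1000` consecutive blocks of length
`L = ⌈β_k / m⌉`. Occurrences of `I_k` lying inside a single block are independent from block
to block, and a fixed block contains one with probability at most `L 2^{-ℓ_k} ≤ 1/m + 2^{-ℓ_k}`;
hence some block contains one with probability at most
`1 - (1 - 1/m - 2^{-ℓ_k})^m ≤ 1 - (1 - 1/m)^m + m 2^{-ℓ_k}`. Every other occurrence ends at one
of the `ℓ_k - 1` positions just after one of the `m - 1` block boundaries.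

Independence is obtained by counting: an event depending on the coordinates in a finite set `S`
has probability `#(admissible patterns on S) · 2^{-|S|}`, and patterns on a disjoint union
factor. -/

namespace BHS

section CoinFlips

variable {ι : Type*} {μ : Measure (ι → Bool)}

def boolIndicator (A : Finset ι) : ι → Bool := fun i => decide (i ∈ A)

lemma measurableSet_setOf_forall_mem_eq (S : Finset ι) (f : ι → Bool) :
    MeasurableSet {y : ι → Bool | ∀ i ∈ S, y i = f i} := by
  simp only [Set.ofPred_forall]
  exact Finset.measurableSet_biInter _ fun i _ =>
    measurable_pi_apply i (measurableSet_singleton _)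

lemma setOf_eq_biUnion_of_dependsOn {S : Finset ι} {p : (ι → Bool) → Prop}
    (hp : DependsOn p S) :
    {y | p y} = ⋃ A ∈ S.powerset.filter (fun A => p (boolIndicator A)),
      {y | ∀ i ∈ S, y i = boolIndicator A i} := by
  ext y
  simp only [Set.mem_ofPred_eq, Set.mem_iUnion, Finset.mem_filter, Finset.mem_powerset,
    exists_prop]
  constructor
  · intro hy
    have hagree : ∀ i ∈ S, y i = boolIndicator (S.filter (y · = true)) i := by
      intro i hi
      cases h : y i <;> simp [boolIndicator, hi, h]
    exact ⟨_, ⟨Finset.filter_subset _ _, (hp hagree).mp hy⟩, hagree⟩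
  · rintro ⟨A, ⟨-, hA⟩, hyA⟩
    exact (hp hyA).mpr hA

lemma measurableSet_setOf_of_dependsOn {S : Finset ι} {p : (ι → Bool) → Prop}
    (hp : DependsOn p S) : MeasurableSet {y | p y} := by
  rw [setOf_eq_biUnion_of_dependsOn hp]
  exact Finset.measurableSet_biUnion _ fun A _ => measurableSet_setOf_forall_mem_eq _ _

lemma IsCoinFlips.measure_setOf_of_dependsOn (hμ : IsCoinFlips μ) {S : Finset ι}
    {p : (ι → Bool) → Prop} (hp : DependsOn p S) :
    μ {y | p y} =
      (S.powerset.filter (fun A => p (boolIndicator A))).card * (1 / 2) ^ S.card := by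
  have hdisj : (S.powerset.filter (fun A => p (boolIndicator A)) : Set (Finset ι)).PairwiseDisjoint
      fun A => {y : ι → Bool | ∀ i ∈ S, y i = boolIndicator A i} := by
    intro A hA B hB hAB
    simp only [Finset.coe_filter, Finset.mem_powerset, Set.mem_ofPred_eq] at hA hB
    refine Set.disjoint_left.mpr fun y hyA hyB => hAB (Finset.ext fun i => ?_)
    by_cases hi : i ∈ S
    · simpa [boolIndicator] using (hyA i hi).symm.trans (hyB i hi)
    · exact iff_of_false (fun h => hi (hA.1 h)) (fun h => hi (hB.1 h))
  rw [setOf_eq_biUnion_of_dependsOn hp,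
    measure_biUnion_finset hdisj fun A _ => measurableSet_setOf_forall_mem_eq _ _,
    Finset.sum_congr rfl fun A _ => hμ.2 S (boolIndicator A), Finset.sum_const, nsmul_eq_mul]

lemma card_filter_powerset_union {S T : Finset ι} (hST : Disjoint S T)
    {p q : (ι → Bool) → Prop} (hp : DependsOn p S) (hq : DependsOn q T) :
    ((S ∪ T).powerset.filter fun A => p (boolIndicator A) ∧ q (boolIndicator A)).card =
      (S.powerset.filter fun A => p (boolIndicator A)).card *
        (T.powerset.filter fun A => q (boolIndicator A)).card := by
  have inter_of_subset {A U : Finset ι} : ∀ i ∈ U, boolIndicator A i = boolIndicator (A ∩ U) i :=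
    fun i hi => by simp [boolIndicator, hi]
  have union_of_disjoint {B C U : Finset ι} (hCU : Disjoint C U) :
      ∀ i ∈ U, boolIndicator (B ∪ C) i = boolIndicator B i :=
    fun i hi => by simp [boolIndicator, Finset.disjoint_right.mp hCU hi]
  rw [← Finset.card_product]
  refine Finset.card_bij' (fun A _ => (A ∩ S, A ∩ T)) (fun BC _ => BC.1 ∪ BC.2) ?_ ?_ ?_ ?_
  · intro A hA
    simp only [Finset.mem_filter, Finset.mem_powerset, Finset.mem_product] at hA ⊢
    exact ⟨⟨Finset.inter_subset_right, (hp inter_of_subset).mp hA.2.1⟩,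
      ⟨Finset.inter_subset_right, (hq inter_of_subset).mp hA.2.2⟩⟩
  · rintro ⟨B, C⟩ hBC
    simp only [Finset.mem_filter, Finset.mem_powerset, Finset.mem_product] at hBC ⊢
    obtain ⟨⟨hBS, hpB⟩, hCT, hqC⟩ := hBC
    refine ⟨Finset.union_subset_union hBS hCT, (hp ?_).mpr hpB, (hq ?_).mpr hqC⟩
    · exact union_of_disjoint (hST.symm.mono_left hCT)
    · rw [Finset.union_comm]; exact union_of_disjoint (hST.mono_left hBS)
  · intro A hA
    simp only [Finset.mem_filter, Finset.mem_powerset] at hA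
    rw [← Finset.inter_union_distrib_left, Finset.inter_eq_left.mpr hA.1]
  · rintro ⟨B, C⟩ hBC
    simp only [Finset.mem_filter, Finset.mem_powerset, Finset.mem_product] at hBC
    have hCS : C ∩ S = ∅ := Finset.disjoint_iff_inter_eq_empty.mp (hST.symm.mono_left hBC.2.1)
    have hBT : B ∩ T = ∅ := Finset.disjoint_iff_inter_eq_empty.mp (hST.mono_left hBC.1.1)
    simp only [Finset.union_inter_distrib_right, Finset.inter_eq_left.mpr hBC.1.1,
      Finset.inter_eq_left.mpr hBC.2.1, hCS, hBT, Finset.union_empty, Finset.empty_union]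

lemma IsCoinFlips.measure_and (hμ : IsCoinFlips μ) {S T : Finset ι} (hST : Disjoint S T)
    {p q : (ι → Bool) → Prop} (hp : DependsOn p S) (hq : DependsOn q T) :
    μ {y | p y ∧ q y} = μ {y | p y} * μ {y | q y} := by
  have hpq : DependsOn (fun y => p y ∧ q y) (S ∪ T : Finset ι) := fun x y h => by
    simp only [Finset.coe_union, Set.mem_union] at h
    simp only [hp fun i hi => h i (Or.inl hi), hq fun i hi => h i (Or.inr hi)]
  rw [hμ.measure_setOf_of_dependsOn hpq, hμ.measure_setOf_of_dependsOn hp,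
    hμ.measure_setOf_of_dependsOn hq, Finset.filter_congr_decidable,
    card_filter_powerset_union hST hp hq, Finset.card_union_of_disjoint hST, pow_add]
  push_cast
  ring

lemma IsCoinFlips.measure_forall {κ : Type*} (hμ : IsCoinFlips μ) (s : Finset κ)
    {T : κ → Finset ι} (hT : (s : Set κ).PairwiseDisjoint T) {p : κ → (ι → Bool) → Prop}
    (hp : ∀ j, DependsOn (p j) (T j)) :
    μ {y | ∀ j ∈ s, p j y} = ∏ j ∈ s, μ {y | p j y} := by
  induction s using Finset.induction_on with
  | empty =>
    simpa using hμ.1.measure_univ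
  | insert a s ha ih =>
    have hdisj : Disjoint (T a) (s.biUnion T) :=
      (Finset.disjoint_biUnion_right _ _ _).2 fun j hj =>
        hT (by simp) (by simp [hj]) fun h => ha (h ▸ hj)
    have hdep : DependsOn (fun y => ∀ j ∈ s, p j y) (s.biUnion T : Finset ι) := fun x y h => by
      refine propext (forall₂_congr fun j hj => (hp j fun i hi => h i ?_).to_iff)
      simpa using ⟨j, hj, hi⟩
    simp only [Finset.forall_mem_insert]
    rw [hμ.measure_and hdisj (hp a) hdep, Finset.prod_insert ha,
      ih (hT.subset (by simp))]

end CoinFlips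

lemma measure_biUnion_le_card_mul {α κ : Type*} [MeasurableSpace α] (μ : Measure α)
    (s : Finset κ) (f : κ → Set α) {r : ℝ≥0∞} (hf : ∀ i ∈ s, μ (f i) ≤ r) :
    μ (⋃ i ∈ s, f i) ≤ s.card * r := by
  rw [← nsmul_eq_mul]
  exact (measure_biUnion_finset_le s f).trans (Finset.sum_le_card_nsmul s _ r hf)

lemma pairwise_disjoint_Ioc_mul (L : ℕ) :
    Pairwise fun i j : ℕ =>
      Disjoint (Finset.Ioc (i * L : ℤ) ((i + 1) * L)) (Finset.Ioc (j * L : ℤ) ((j + 1) * L)) := by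
  have key {i j : ℕ} (hij : i < j) : Disjoint (Finset.Ioc (i * L : ℤ) ((i + 1) * L))
      (Finset.Ioc (j * L : ℤ) ((j + 1) * L)) := by
    have : ((i + 1) * L : ℤ) ≤ j * L := by gcongr; exact_mod_cast hij
    exact Finset.disjoint_left.mpr fun x hx hx' => by
      simp only [Finset.mem_Ioc] at hx hx'
      omega
  intro i j hij
  rcases lt_or_gt_of_ne hij with h | h
  exacts [key h, (key h).symm]

lemma exists_block_or_boundary {n L m : ℕ} (hn : 1 ≤ n) (hL : 0 < L) {h : ℤ} (hnh : n ≤ h)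
    (hhm : h ≤ m * L) :
    (∃ i ∈ Finset.range m, (i * L + n : ℤ) ≤ h ∧ h ≤ (i + 1) * L) ∨
      ∃ i ∈ Finset.Ico 1 m, (i * L : ℤ) < h ∧ h < i * L + n := by
  have hL' : (0 : ℤ) < L := by exact_mod_cast hL
  obtain ⟨i, hi⟩ : ∃ i : ℕ, (i : ℤ) = (h - 1) / L :=
    ⟨_, Int.toNat_of_nonneg (Int.ediv_nonneg (by omega) hL'.le)⟩
  have hlo : (i * L : ℤ) ≤ h - 1 := by rw [hi, mul_comm]; exact Int.mul_ediv_self_le hL'.ne'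
  have hhi : h - 1 < (i + 1) * L := by
    rw [hi, mul_comm, mul_add, mul_one]
    exact Int.lt_mul_ediv_self_add hL'
  have him : i < m := by
    have : (i * L : ℤ) < m * L := by omega
    exact_mod_cast lt_of_mul_lt_mul_right this hL'.le
  by_cases hblock : (i * L + n : ℤ) ≤ h
  · exact Or.inl ⟨i, Finset.mem_range.mpr him, hblock, by omega⟩
  · refine Or.inr ⟨i, Finset.mem_Ico.mpr ⟨Nat.one_le_iff_ne_zero.mpr ?_, him⟩, by omega, by omega⟩
    rintro rfl
    push_cast at hblock
    omega

section Windows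

variable {μ : Measure (ℤ → Bool)}

lemma IsCoinFlips.measure_biUnion_blocks_le (hμ : IsCoinFlips μ) {n L m : ℕ} (hn : 1 ≤ n)
    {E : ℤ → Set (ℤ → Bool)} {r : ℝ≥0∞}
    (hE : ∀ h, DependsOn (· ∈ E h) (Finset.Ioc (h - n) h : Set ℤ)) (hr : ∀ h, μ (E h) ≤ r) :
    μ (⋃ i ∈ Finset.range m, ⋃ h ∈ Finset.Icc (i * L + n : ℤ) ((i + 1) * L), E h) ≤
      1 - (1 - L * r) ^ m := by
  have : IsProbabilityMeasure μ := hμ.1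
  set W : ℕ → Set (ℤ → Bool) := fun i => ⋃ h ∈ Finset.Icc (i * L + n : ℤ) ((i + 1) * L), E h
  have hmeas (i : ℕ) : MeasurableSet (W i) :=
    Finset.measurableSet_biUnion _ fun h _ => measurableSet_setOf_of_dependsOn (hE h)
  have hdep (i : ℕ) : DependsOn (· ∉ W i) (Finset.Ioc (i * L : ℤ) ((i + 1) * L) : Set ℤ) :=
    fun x y hxy => by
      simp only [W, Set.mem_iUnion, not_exists]
      refine propext (forall₂_congr fun h hh => not_congr (hE h fun j hj => hxy j ?_).to_iff)
      simp only [Finset.coe_Ioc, Set.mem_Ioc, Finset.mem_Icc] at hj hh ⊢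
      omega
  have hW (i : ℕ) : 1 - L * r ≤ μ (W i)ᶜ := by
    rw [prob_compl_eq_one_sub (hmeas i)]
    refine tsub_le_tsub_left ((measure_biUnion_le_card_mul μ _ _ fun h _ => hr h).trans ?_) 1
    gcongr
    have : ((i : ℤ) + 1) * L = i * L + L := by ring
    rw [Int.card_Icc]
    omega
  have hcompl : (⋃ i ∈ Finset.range m, W i)ᶜ = {y | ∀ i ∈ Finset.range m, y ∉ W i} := by
    ext y
    simp
  have hWc : (1 - L * r) ^ m ≤ μ (⋃ i ∈ Finset.range m, W i)ᶜ := by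
    rw [hcompl, hμ.measure_forall _ ((pairwise_disjoint_Ioc_mul L).set_pairwise _) hdep]
    calc (1 - L * r) ^ m = (1 - L * r) ^ (Finset.range m).card := by rw [Finset.card_range]
      _ ≤ _ := Finset.pow_card_le_prod _ _ _ fun i _ => hW i
  rw [ENNReal.eq_sub_of_add_eq (measure_ne_top μ _)
    (prob_add_prob_compl (Finset.measurableSet_biUnion _ fun i _ => hmeas i))]
  exact tsub_le_tsub_left hWc 1

theorem IsCoinFlips.measure_biUnion_window_le (hμ : IsCoinFlips μ) {n L m : ℕ} (hn : 1 ≤ n)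
    (hL : 0 < L) {E : ℤ → Set (ℤ → Bool)} {r : ℝ≥0∞}
    (hE : ∀ h, DependsOn (· ∈ E h) (Finset.Ioc (h - n) h : Set ℤ)) (hr : ∀ h, μ (E h) ≤ r) :
    μ (⋃ h ∈ Finset.Icc (n : ℤ) (m * L), E h) ≤
      1 - (1 - L * r) ^ m + (m - 1 : ℕ) * ((n - 1 : ℕ) * r) := by
  have hcover : ⋃ h ∈ Finset.Icc (n : ℤ) (m * L), E h ⊆
      (⋃ i ∈ Finset.range m, ⋃ h ∈ Finset.Icc (i * L + n : ℤ) ((i + 1) * L), E h) ∪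
        ⋃ i ∈ Finset.Ico 1 m, ⋃ h ∈ Finset.Ioo (i * L : ℤ) (i * L + n), E h := by
    simp only [Set.iUnion_subset_iff, Finset.mem_Icc, Finset.mem_Ioo]
    intro h ⟨hnh, hhm⟩ y hy
    rcases exists_block_or_boundary hn hL hnh hhm with ⟨i, hi, hblock⟩ | ⟨i, hi, hboundary⟩
    · exact Or.inl (Set.mem_iUnion₂.mpr ⟨i, hi, Set.mem_iUnion₂.mpr ⟨h, hblock, hy⟩⟩)
    · exact Or.inr
        (Set.mem_iUnion₂.mpr ⟨i, hi, Set.mem_iUnion₂.mpr ⟨h, hboundary, hy⟩⟩)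
  have hboundary : μ (⋃ i ∈ Finset.Ico 1 m, ⋃ h ∈ Finset.Ioo (i * L : ℤ) (i * L + n), E h) ≤
      (m - 1 : ℕ) * ((n - 1 : ℕ) * r) := by
    have hcard (i : ℕ) : (Finset.Ioo (i * L : ℤ) (i * L + n)).card = n - 1 := by
      rw [Int.card_Ioo]
      omega
    rw [← Nat.card_Ico 1 m]
    exact measure_biUnion_le_card_mul μ _ _ fun i _ =>
      hcard i ▸ measure_biUnion_le_card_mul μ _ _ fun h _ => hr h
  calc _ ≤ _ := measure_mono hcover
    _ ≤ _ := measure_union_le _ _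
    _ ≤ _ := add_le_add (hμ.measure_biUnion_blocks_le hn hE hr) hboundary

lemma one_le_ell {ε : ℝ} (hε : -1 < ε) (k : ℕ) : 1 ≤ ell ε k :=
  Nat.one_le_ceil_iff.mpr <| pow_pos (by linarith) k

lemma endsAt_iff {ε : ℝ} {k : ℕ} (hk : 1 ≤ ell ε k) {y : ℤ → Bool} {h : ℤ} :
    EndsAt ε k y h ↔ ∀ i ∈ Finset.Ioc (h - ell ε k) h, y i = decide (i ≠ h) := by
  simp only [EndsAt, Finset.mem_Ioc]
  constructor
  · rintro ⟨hyh, hy⟩ i ⟨hi₁, hi₂⟩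
    rcases hi₂.lt_or_eq with hih | rfl
    · have := hy (h - i).toNat (by omega) (by omega)
      rwa [show h - ((h - i).toNat : ℤ) = i by omega, ← decide_eq_true_iff.mpr hih.ne] at this
    · simpa using hyh
  · intro hy
    refine ⟨by simpa using hy h (by omega), fun i hi₁ hi₂ => ?_⟩
    simpa [show i ≠ 0 by omega] using hy (h - i) (by omega)

lemma dependsOn_endsAt {ε : ℝ} {k : ℕ} (hk : 1 ≤ ell ε k) (h : ℤ) :
    DependsOn (fun y => EndsAt ε k y h) (Finset.Ioc (h - ell ε k) h : Set ℤ) := fun x y hxy => by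
  refine propext ((endsAt_iff hk).trans (Iff.trans ?_ (endsAt_iff hk).symm))
  exact forall₂_congr fun i hi => by rw [hxy i hi]

lemma IsCoinFlips.measure_endsAt (hμ : IsCoinFlips μ) {ε : ℝ} {k : ℕ} (hk : 1 ≤ ell ε k)
    (h : ℤ) : μ {y | EndsAt ε k y h} = (1 / 2) ^ ell ε k := by
  simp_rw [endsAt_iff hk]
  rw [hμ.2, Int.card_Ioc, sub_sub_cancel, Int.toNat_natCast]

lemma one_sub_pow_add_le {m n : ℕ} (hm : 1 ≤ m) (hn : 1 ≤ n) {x ρ : ℝ} (hρ : 0 ≤ ρ)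
    (hρ1 : ρ ≤ 1) (hx : 1 / m ≤ x) (hxρ : x ≤ 1 / m + ρ) :
    1 - (1 - x) ^ m + (m - 1 : ℕ) * ((n - 1 : ℕ) * ρ) ≤ 1 - (1 - 1 / m) ^ m + m * n * ρ := by
  have h0 : 0 ≤ 1 / (m : ℝ) := by positivity
  have h1 : 1 / (m : ℝ) ≤ 1 := by rw [div_le_one (by positivity)]; exact_mod_cast hm
  have hmax : max |1 - 1 / (m : ℝ)| |1 - x| ^ (m - 1) ≤ 1 :=
    pow_le_one₀ (le_max_of_le_left (abs_nonneg _))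
      (max_le (abs_le.mpr ⟨by linarith, by linarith⟩) (abs_le.mpr ⟨by linarith, by linarith⟩))
  have hpow : (1 - 1 / m) ^ m - (1 - x) ^ m ≤ m * ρ := by
    refine (le_abs_self _).trans ((abs_pow_sub_pow_le _ _ m).trans ?_)
    rw [show (1 - 1 / (m : ℝ)) - (1 - x) = x - 1 / m by ring, abs_of_nonneg (by linarith)]
    calc (x - 1 / m) * m * max |1 - 1 / (m : ℝ)| |1 - x| ^ (m - 1)
        ≤ ρ * m * 1 := by gcongr; linarith
      _ = m * ρ := by ring
  push_cast [Nat.cast_sub hm, Nat.cast_sub hn]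
  nlinarith [mul_nonneg (sub_nonneg.mpr (by exact_mod_cast hn : (1 : ℝ) ≤ n)) hρ]

lemma one_sub_pow_add_le_ofReal {m n L : ℕ} (hm : 1 ≤ m) (hn : 1 ≤ n) (hmL : 2 ^ n ≤ m * L)
    (hLm : m * L ≤ 2 ^ n + m) (hLn : L ≤ 2 ^ n) :
    1 - (1 - L * (1 / 2) ^ n) ^ m + (m - 1 : ℕ) * ((n - 1 : ℕ) * (1 / 2 : ℝ≥0∞) ^ n) ≤
      ENNReal.ofReal (1 - (1 - 1 / m) ^ m + m * n * ((2 : ℝ) ^ n)⁻¹) := by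
  set ρ : ℝ := ((2 : ℝ) ^ n)⁻¹
  have hρ : (1 / 2 : ℝ≥0∞) ^ n = ENNReal.ofReal ρ := by
    rw [ENNReal.ofReal_inv_of_pos (by positivity), ENNReal.ofReal_pow zero_le_two,
      ENNReal.ofReal_ofNat, one_div, ENNReal.inv_pow]
  have hρ0 : 0 ≤ ρ := by positivity
  have hρ2 : ρ * 2 ^ n = 1 := inv_mul_cancel₀ (by positivity)
  have hm0 : (0 : ℝ) < m := by exact_mod_cast hm
  have hmLr : (2 : ℝ) ^ n ≤ m * L := by exact_mod_cast hmL
  have hLmr : (m : ℝ) * L ≤ 2 ^ n + m := by exact_mod_cast hLm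
  have hLρ : L * ρ ≤ 1 := by
    calc (L : ℝ) * ρ ≤ 2 ^ n * ρ := by gcongr; exact_mod_cast hLn
      _ = 1 := by rw [mul_comm, hρ2]
  have hLρ0 : 0 ≤ (L : ℝ) * ρ := by positivity
  rw [hρ, ← ENNReal.ofReal_natCast, ← ENNReal.ofReal_natCast, ← ENNReal.ofReal_natCast,
    ← ENNReal.ofReal_mul (by positivity), ← ENNReal.ofReal_mul (by positivity),
    ← ENNReal.ofReal_mul (by positivity), ← ENNReal.ofReal_one,
    ← ENNReal.ofReal_sub _ (by positivity), ← ENNReal.ofReal_pow (by linarith),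
    ← ENNReal.ofReal_sub _ (pow_nonneg (by linarith) _),
    ← ENNReal.ofReal_add (sub_nonneg.mpr (pow_le_one₀ (by linarith) (by linarith)))
      (by positivity)]
  refine ENNReal.ofReal_le_ofReal (one_sub_pow_add_le hm hn hρ0 ?_ ?_ ?_)
  · exact inv_le_one_of_one_le₀ (one_le_pow₀ one_le_two)
  · rw [div_le_iff₀ hm0]
    nlinarith [mul_le_mul_of_nonneg_left hmLr hρ0]
  · refine le_of_mul_le_mul_left ?_ hm0
    rw [mul_add, mul_one_div_cancel hm0.ne']
    nlinarith [mul_le_mul_of_nonneg_left hLmr hρ0]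

theorem IsCoinFlips.measure_exists_endsAt_le (hμ : IsCoinFlips μ) {ε : ℝ} (hε : -1 < ε)
    (k : ℕ) {m : ℕ} (hm : 1 ≤ m) :
    μ {y | ∃ h : ℤ, (ell ε k : ℤ) ≤ h ∧ h ≤ (beta ε k : ℤ) ∧ EndsAt ε k y h} ≤
      ENNReal.ofReal (1 - (1 - 1 / m) ^ m + m * ell ε k * (2 : ℝ) ^ (-(ell ε k : ℝ))) := by
  set n := ell ε k
  have hn : 1 ≤ n := one_le_ell hε k
  obtain ⟨L, hmL, hLm, hLn⟩ : ∃ L, 2 ^ n ≤ m * L ∧ m * L ≤ 2 ^ n + m ∧ L ≤ 2 ^ n :=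
    ⟨2 ^ n ⌈/⌉ m, le_smul_ceilDiv (α := ℕ) hm, (Nat.mul_div_le _ _).trans (Nat.sub_le _ _),
      (ceilDiv_le_iff_le_mul hm).mpr (Nat.le_mul_of_pos_left _ hm)⟩
  have hL : 0 < L := Nat.pos_of_ne_zero fun h0 => by simp [h0] at hmL
  have hcover : {y | ∃ h : ℤ, (n : ℤ) ≤ h ∧ h ≤ (beta ε k : ℤ) ∧ EndsAt ε k y h} ⊆
      ⋃ h ∈ Finset.Icc (n : ℤ) (m * L), {y | EndsAt ε k y h} := by
    rintro y ⟨h, hnh, hhβ, hy⟩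
    refine Set.mem_iUnion₂.mpr ⟨h, Finset.mem_Icc.mpr ⟨hnh, hhβ.trans ?_⟩, hy⟩
    exact_mod_cast hmL
  rw [Real.rpow_neg zero_le_two, Real.rpow_natCast]
  calc _ ≤ _ := measure_mono hcover
    _ ≤ _ := hμ.measure_biUnion_window_le hn hL (dependsOn_endsAt hn)
        fun h => (hμ.measure_endsAt hn h).le
    _ ≤ _ := one_sub_pow_add_le_ofReal hm hn hmL hLm hLn

end Windows

end BHS

theorem statement16_general (ε : ℝ) (hε : ε ∈ Set.Ioo (0 : ℝ) (1 / 2)) (k : ℕ)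
    (μ : MeasureTheory.Measure (ℤ → Bool)) (hμ : BHS.IsCoinFlips μ) :
    μ {y | ∃ h : ℤ, (BHS.ell ε k : ℤ) ≤ h ∧ h ≤ (BHS.beta ε k : ℤ) ∧
        BHS.EndsAt ε k y h} ≤
      ENNReal.ofReal (1 - (1 - 1 / 1000) ^ 1000 +
        1000 * (BHS.ell ε k : ℝ) * (2 : ℝ) ^ (-(BHS.ell ε k : ℝ))) := by
  exact_mod_cast hμ.measure_exists_endsAt_le (by linarith [hε.1]) k (m := 1000) (by norm_num)

/-- Under the i.i.d. fair coin-flip measure, the probability that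
`I_k` occurs as a consecutive subword of `(y_1, …, y_{β_k})` is at most
`1 - (1 - 1/1000)^{1000} + 1000·ℓ_k·2^{-ℓ_k}`. -/
theorem statement16 (ε : ℝ) (hε : ε ∈ Set.Ioo (0 : ℝ) (1 / 2)) (k : ℕ) (hk : 1 ≤ k)
    (μ : MeasureTheory.Measure (ℤ → Bool)) (hμ : BHS.IsCoinFlips μ) :
    μ {y | ∃ h : ℤ, (BHS.ell ε k : ℤ) ≤ h ∧ h ≤ (BHS.beta ε k : ℤ) ∧
        BHS.EndsAt ε k y h} ≤
      ENNReal.ofReal (1 - (1 - 1 / 1000) ^ 1000 +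
        1000 * (BHS.ell ε k : ℝ) * (2 : ℝ) ^ (-(BHS.ell ε k : ℝ))) :=
  statement16_general ε hε k μ hμ
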